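/- Let y, z, g ∈ PL₊([η,ζ]) with g⁻¹ y g = z, and suppose there exist α > 0 and c > 1 such that y(t) - η = z(t) - η = c(t - η) for all t ∈ [η, η + α]. Then g is linear on [η, η+α] ∩ g⁻¹([η, η+α]); in particular the graph of g is linear inside the square [η, η+α] × [η, η+α]. -/

import Mathlib

/-- An orientation-preserving piecewise-linear homeomorphism of the compact interval
[η, ζ] with finitely many breakpoints (an element of PL₊([η,ζ])). -/
def PLHomeoOn (η ζ : ℝ) (f : ℝ → ℝ) : Prop :=
  f η = η ∧ f ζ = ζ ∧ StrictMonoOn f (Set.Icc η ζ) ∧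
  ∃ (n : ℕ) (x : Fin (n + 1) → ℝ), StrictMono x ∧ x 0 = η ∧ x (Fin.last n) = ζ ∧
    ∀ i : Fin n, ∃ a b : ℝ, 0 < a ∧
      ∀ t ∈ Set.Icc (x i.castSucc) (x i.succ), f t = a * t + b

/-!
Translate η to 0 and write `h s = g (η + s) - η`. Being a PL homeomorphism fixing 0, `h` is
linear, `h s = a * s`, on some interval `[0, δ]`; the conjugacy relation turns into
`h (c * s) = c * h s` whenever `s` and `h s` lie in `[0, α]`. Since `c > 1`, every point of the
box `[0, α]²` on the graph of `h` is reached from `[0, δ]` by finitely many multiplications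
by `c`, which stay in the box by monotonicity and preserve the identity `h s = a * s`.
-/

open Set

lemma PLHomeoOn.exists_affine_near_left {η ζ : ℝ} {g : ℝ → ℝ} (hg : PLHomeoOn η ζ g)
    (hηζ : η < ζ) : ∃ δ > 0, ∃ a : ℝ, ∀ t ∈ Icc η (η + δ), g t = η + a * (t - η) := by
  obtain ⟨hgη, -, -, n, x, hx, hx0, hxn, hpieces⟩ := hg
  have hn : 0 < n := by
    rcases Nat.eq_zero_or_pos n with rfl | hn
    · exact absurd (hx0.symm.trans hxn) hηζ.ne
    · exact hn
  let i : Fin n := ⟨0, hn⟩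
  have hxi : x i.castSucc = η := hx0
  obtain ⟨a, b, -, hab⟩ := hpieces i
  have hlt : η < x i.succ := hxi ▸ hx (Fin.castSucc_lt_succ (i := i))
  have hb : b = η - a * η := by
    have := hab η ⟨hxi.le, hlt.le⟩
    linarith
  refine ⟨x i.succ - η, by linarith, a, fun t ht => ?_⟩
  rw [hab t ⟨hxi.le.trans ht.1, by linarith [ht.2]⟩, hb]
  ring

lemma eq_mul_of_map_mul_eq {h : ℝ → ℝ} {α δ a c : ℝ} (hc : 1 < c) (hδ : 0 < δ)
    (hmono : MonotoneOn h (Icc 0 α)) (hlin : ∀ s ∈ Icc 0 δ, h s = a * s)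
    (hscale : ∀ s ∈ Icc 0 α, h s ≤ α → h (c * s) = c * h s) :
    ∀ s ∈ Icc 0 α, h s ≤ α → h s = a * s := by
  have hc0 : 0 < c := one_pos.trans hc
  have hpow : ∀ N : ℕ, ∀ s ∈ Icc 0 α, h s ≤ α → s ≤ δ * c ^ N → h s = a * s := by
    intro N
    induction N with
    | zero => exact fun s hs _ hsδ => hlin s ⟨hs.1, by simpa using hsδ⟩
    | succ N ih =>
      intro s hs hhs hsδ
      have hcs : c * (s / c) = s := mul_div_cancel₀ s hc0.ne'
      have hs'0 : 0 ≤ s / c := div_nonneg hs.1 hc0.le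
      have hs'le : s / c ≤ s := div_le_self hs.1 hc.le
      have hs' : s / c ∈ Icc 0 α := ⟨hs'0, hs'le.trans hs.2⟩
      have hhs' : h (s / c) ≤ α := (hmono hs' hs hs'le).trans hhs
      have hs'δ : s / c ≤ δ * c ^ N := by
        rw [div_le_iff₀ hc0]
        simpa [pow_succ, mul_assoc] using hsδ
      calc h s = h (c * (s / c)) := by rw [hcs]
        _ = c * (a * (s / c)) := by
          rw [hscale _ hs' hhs', ih _ hs' hhs' hs'δ]
        _ = a * s := by rw [mul_left_comm, hcs]
  intro s hs hhs
  obtain ⟨N, hN⟩ := pow_unbounded_of_one_lt (α / δ) hc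
  rw [div_lt_iff₀ hδ] at hN
  exact hpow N s hs hhs (by nlinarith [hs.2])

lemma map_add_mul_sub_eq_of_conj {η ζ α c s : ℝ} {y z g : ℝ → ℝ} (hgη : g η = η)
    (hmono : MonotoneOn g (Icc η ζ)) (hconj : ∀ t ∈ Icc η ζ, y (g t) = g (z t))
    (hαζ : η + α ≤ ζ)
    (hlin : ∀ t ∈ Icc η (η + α), y t - η = c * (t - η) ∧ z t - η = c * (t - η))
    (hs : s ∈ Icc 0 α) (hgs : g (η + s) - η ≤ α) :
    g (η + c * s) - η = c * (g (η + s) - η) := by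
  have hηs : η + s ∈ Icc η ζ := ⟨by linarith [hs.1], by linarith [hs.2]⟩
  have hgs0 : η ≤ g (η + s) := by
    simpa [hgη] using hmono ⟨le_rfl, by linarith [hs.1, hs.2]⟩ hηs (by linarith [hs.1])
  have hz : z (η + s) = η + c * s := by
    have := (hlin (η + s) ⟨by linarith [hs.1], by linarith [hs.2]⟩).2
    linarith
  rw [← hz, ← hconj (η + s) hηs]
  exact (hlin (g (η + s)) ⟨hgs0, by linarith⟩).1

theorem stmt16_general (η ζ : ℝ) (hηζ : η < ζ) (y z g : ℝ → ℝ)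
    (hg : PLHomeoOn η ζ g)
    (hconj : ∀ t ∈ Set.Icc η ζ, y (g t) = g (z t))
    (α : ℝ) (hαζ : η + α ≤ ζ) (c : ℝ) (hc : 1 < c)
    (hlin : ∀ t ∈ Set.Icc η (η + α),
      y t - η = c * (t - η) ∧ z t - η = c * (t - η)) :
    ∃ a b : ℝ, ∀ t ∈ Set.Icc η (η + α),
      g t ∈ Set.Icc η (η + α) → g t = a * t + b := by
  obtain ⟨δ, hδ, a, hga⟩ := hg.exists_affine_near_left hηζ
  have hmono : MonotoneOn g (Icc η ζ) := hg.2.2.1.monotoneOn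
  have hshift : ∀ s ∈ Icc 0 α, η + s ∈ Icc η ζ := fun s hs =>
    ⟨by linarith [hs.1], by linarith [hs.2]⟩
  have hmono_shift : MonotoneOn (fun s => g (η + s) - η) (Icc 0 α) := fun s hs t ht hst => by
    simpa using hmono (hshift s hs) (hshift t ht) (by linarith)
  have hlin_shift : ∀ s ∈ Icc 0 δ, g (η + s) - η = a * s := fun s hs => by
    rw [hga (η + s) ⟨by linarith [hs.1], by linarith [hs.2]⟩]
    ring
  have hbox := eq_mul_of_map_mul_eq hc hδ hmono_shift hlin_shift fun _ hs hgs =>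
    map_add_mul_sub_eq_of_conj hg.1 hmono hconj hαζ hlin hs hgs
  refine ⟨a, η - a * η, fun t ht hgt => ?_⟩
  have := hbox (t - η) ⟨by linarith [ht.1], by linarith [ht.2]⟩
    (by simp only [add_sub_cancel]; linarith [hgt.2])
  simp only [add_sub_cancel] at this
  linarith

/-- Initial linearity box: if y and z agree and are linear with slope c > 1 on
[η, η+α], then any PL conjugator g from z to y is linear on the part of [η, η+α]
mapped by g into [η, η+α]; the graph of g is linear inside the square
[η,η+α] × [η,η+α]. -/
theorem stmt16 (η ζ : ℝ) (hηζ : η < ζ) (y z g : ℝ → ℝ)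
    (hy : PLHomeoOn η ζ y) (hz : PLHomeoOn η ζ z) (hg : PLHomeoOn η ζ g)
    (hconj : ∀ t ∈ Set.Icc η ζ, y (g t) = g (z t))
    (α : ℝ) (hα : 0 < α) (hαζ : η + α ≤ ζ) (c : ℝ) (hc : 1 < c)
    (hlin : ∀ t ∈ Set.Icc η (η + α),
      y t - η = c * (t - η) ∧ z t - η = c * (t - η)) :
    ∃ a b : ℝ, ∀ t ∈ Set.Icc η (η + α),
      g t ∈ Set.Icc η (η + α) → g t = a * t + b :=
  stmt16_general η ζ hηζ y z g hg hconj α hαζ c hc hlin
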